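/- Let F ⊆ ℝ^m be a relatively open convex set and H a hyperplane. If F ∩ H* ≠ ∅ for each * in a subset of {0, <, >} (where H^0 = H), then ∑_{* ∈ {0,<,>}, F∩H* ≠ ∅} (−1)^{dim(F ∩ H*)} = (−1)^{dim F}. -/

import Mathlib

/-!
Either the functional `f` changes sign on `F` or it does not. If it does, convexity puts a point
of `F` on the hyperplane. The two open half-pieces are nonempty and open in `span F`, hence span it,
while `F ∩ {f = 0}` is open in `span F ⊓ ker f`, one dimension lower; so the sum is
`(-1)^(d-1) + 2 (-1)^d = (-1)^d`. If it does not, `F` cannot touch the hyperplane without lying in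
it, since relative openness lets one step across from a point on it; so `F` lies in exactly one of
the three pieces.
-/

open scoped Classical

open Module Submodule Set

theorem Convex.exists_mem_eq_zero_of_nonpos_of_nonneg {E : Type*} [AddCommGroup E] [Module ℝ E]
    {F : Set E} (hF : Convex ℝ F) (f : E →ₗ[ℝ] ℝ) {x y : E} (hx : x ∈ F) (hy : y ∈ F)
    (hfx : f x ≤ 0) (hfy : 0 ≤ f y) : ∃ z ∈ F, f z = 0 := by
  have h0 : (0 : ℝ) ∈ f '' segment ℝ x y := by
    rw [← f.coe_toAffineMap, image_segment, segment_eq_uIcc]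
    exact ⟨inf_le_left.trans hfx, hfy.trans le_sup_right⟩
  obtain ⟨z, hz, hfz⟩ := h0
  exact ⟨z, hF.segment_subset hx hy hz, hfz⟩

theorem Submodule.finrank_inf_ker_add_one {K V : Type*} [Field K] [AddCommGroup V] [Module K V]
    (W : Submodule K V) [FiniteDimensional K W] (f : Dual K V) {y : V} (hy : y ∈ W)
    (hfy : f y ≠ 0) : finrank K ↥(W ⊓ LinearMap.ker f) + 1 = finrank K W := by
  have hf : f.domRestrict W ≠ 0 := fun h => hfy (LinearMap.congr_fun h ⟨y, hy⟩)
  rw [← Dual.finrank_ker_add_one_of_ne_zero hf, LinearMap.ker_domRestrict, ← map_comap_subtype,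
    finrank_map_subtype_eq]

section SignedDim

variable {E : Type*} [AddCommGroup E] [Module ℝ E]

noncomputable def signedDim (S : Set E) : ℤ :=
  if S.Nonempty then (-1) ^ finrank ℝ (span ℝ S) else 0

theorem signedDim_of_nonempty {S : Set E} (hS : S.Nonempty) :
    signedDim S = (-1) ^ finrank ℝ (span ℝ S) :=
  if_pos hS

theorem signedDim_inter_setOf_of_forall {S : Set E} {p : E → Prop} (h : ∀ x ∈ S, p x) :
    signedDim (S ∩ {x | p x}) = signedDim S :=
  congrArg signedDim (inter_eq_left.mpr h)

theorem signedDim_inter_setOf_of_forall_not {S : Set E} {p : E → Prop} (h : ∀ x ∈ S, ¬p x) :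
    signedDim (S ∩ {x | p x}) = 0 :=
  if_neg fun ⟨x, hxS, hpx⟩ => h x hxS hpx

variable [TopologicalSpace E] [IsTopologicalAddGroup E] [ContinuousSMul ℝ E]

theorem Submodule.span_eq_of_isOpen_preimage_coe {W : Submodule ℝ E} {U : Set E}
    (hUW : U ⊆ W) (hU : U.Nonempty) (hopen : IsOpen ((↑) ⁻¹' U : Set W)) :
    span ℝ U = W := by
  obtain ⟨x, hx⟩ := hU
  have htop : span ℝ ((↑) ⁻¹' U : Set W) = ⊤ :=
    eq_top_of_nonempty_interior' _
      ⟨⟨x, hUW hx⟩, interior_mono subset_span (hopen.interior_eq.symm ▸ hx)⟩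
  rw [← map_subtype_top W, ← htop, ← span_image, coe_subtype,
    image_preimage_eq_of_subset (by simpa using hUW)]

theorem exists_pos_add_smul_mem_of_isOpen_preimage_coe {W : Submodule ℝ E} {U : Set E}
    (hopen : IsOpen ((↑) ⁻¹' U : Set W)) {x v : E} (hxW : x ∈ W) (hvW : v ∈ W) (hx : x ∈ U) :
    ∃ t : ℝ, 0 < t ∧ x + t • v ∈ U := by
  have hcont : Continuous fun t : ℝ => (⟨x, hxW⟩ + t • ⟨v, hvW⟩ : W) := by fun_prop
  have hev : ∀ᶠ t : ℝ in nhds 0, x + t • v ∈ U :=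
    (hopen.preimage hcont).mem_nhds (by simpa using hx)
  exact hev.exists_gt

theorem forall_eq_zero_or_forall_pos_of_nonneg {F : Set E}
    (hopen : IsOpen ((↑) ⁻¹' F : Set (span ℝ F))) (f : E →L[ℝ] ℝ) (hf : ∀ x ∈ F, 0 ≤ f x) :
    (∀ x ∈ F, f x = 0) ∨ ∀ x ∈ F, 0 < f x := by
  refine or_iff_not_imp_left.mpr fun h x hx => (hf x hx).lt_of_ne fun hfx => ?_
  push Not at h
  obtain ⟨y, hy, hfy⟩ := h
  have hfy_pos : 0 < f y := (hf y hy).lt_of_ne' hfy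
  -- moving from `y` through `x` and slightly beyond crosses the hyperplane `f = 0`
  obtain ⟨t, ht, hz⟩ := exists_pos_add_smul_mem_of_isOpen_preimage_coe hopen (subset_span hx)
    (sub_mem (subset_span hx) (subset_span hy)) hx
  have hfz := hf _ hz
  rw [map_add, map_smul, map_sub, ← hfx, smul_eq_mul] at hfz
  nlinarith

theorem forall_eq_zero_or_forall_neg_or_forall_pos {F : Set E}
    (hopen : IsOpen ((↑) ⁻¹' F : Set (span ℝ F))) (f : E →L[ℝ] ℝ)
    (h : ¬((∃ x ∈ F, f x < 0) ∧ ∃ x ∈ F, 0 < f x)) :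
    (∀ x ∈ F, f x = 0) ∨ (∀ x ∈ F, f x < 0) ∨ ∀ x ∈ F, 0 < f x := by
  by_cases hneg : ∃ x ∈ F, f x < 0
  · have hnonpos : ∀ x ∈ F, 0 ≤ (-f) x := fun x hx =>
      neg_nonneg.mpr (not_lt.mp fun hpos => h ⟨hneg, x, hx, hpos⟩)
    rcases forall_eq_zero_or_forall_pos_of_nonneg hopen (-f) hnonpos with hzero | hpos
    · obtain ⟨x, hx, hfx⟩ := hneg
      exact absurd (neg_eq_zero.mp (hzero x hx)) hfx.ne
    · exact Or.inr (Or.inl fun x hx => neg_pos.mp (hpos x hx))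
  · push Not at hneg
    exact (forall_eq_zero_or_forall_pos_of_nonneg hopen f hneg).imp_right Or.inr

theorem signedDim_inter_hyperplane_of_exists_neg_of_exists_pos [FiniteDimensional ℝ E]
    {F : Set E} (hF : Convex ℝ F) (hopen : IsOpen ((↑) ⁻¹' F : Set (span ℝ F)))
    (f : E →L[ℝ] ℝ) (hneg : (F ∩ {x | f x < 0}).Nonempty) (hpos : (F ∩ {x | 0 < f x}).Nonempty) :
    signedDim (F ∩ {x | f x = 0}) + signedDim (F ∩ {x | f x < 0}) +
      signedDim (F ∩ {x | 0 < f x}) = (-1) ^ finrank ℝ (span ℝ F) := by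
  set W := span ℝ F
  obtain ⟨y, hy, hfy : f y < 0⟩ := id hneg
  obtain ⟨z, hz, hfz : 0 < f z⟩ := id hpos
  have hzero : (F ∩ {x | f x = 0}).Nonempty :=
    hF.exists_mem_eq_zero_of_nonpos_of_nonneg (f : E →ₗ[ℝ] ℝ) hy hz hfy.le hfz.le
  have hsubset : ∀ p : E → Prop, F ∩ {x | p x} ⊆ W := fun _ x hx => subset_span hx.1
  have hspan_neg : span ℝ (F ∩ {x | f x < 0}) = W :=
    span_eq_of_isOpen_preimage_coe (hsubset _) hneg
      (hopen.inter (isOpen_lt (f.continuous.comp continuous_subtype_val) continuous_const))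
  have hspan_pos : span ℝ (F ∩ {x | 0 < f x}) = W :=
    span_eq_of_isOpen_preimage_coe (hsubset _) hpos
      (hopen.inter (isOpen_lt continuous_const (f.continuous.comp continuous_subtype_val)))
  set W₀ := W ⊓ LinearMap.ker (f : E →ₗ[ℝ] ℝ)
  have hspan_zero : span ℝ (F ∩ {x | f x = 0}) = W₀ := by
    refine span_eq_of_isOpen_preimage_coe
      (fun x hx => mem_inf.mpr ⟨subset_span hx.1, hx.2⟩) hzero ?_
    have hpre : ((↑) ⁻¹' (F ∩ {x | f x = 0}) : Set W₀) =
        (fun x : W₀ => (⟨x, (mem_inf.mp x.2).1⟩ : W)) ⁻¹' ((↑) ⁻¹' F) := by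
      ext x
      exact ⟨And.left, fun hx => ⟨hx, (mem_inf.mp x.2).2⟩⟩
    rw [hpre]
    exact hopen.preimage (continuous_subtype_val.subtype_mk _)
  have hrank := W.finrank_inf_ker_add_one (f : E →ₗ[ℝ] ℝ) (subset_span hz) hfz.ne'
  rw [signedDim_of_nonempty hzero, signedDim_of_nonempty hneg,
    signedDim_of_nonempty hpos, hspan_zero, hspan_neg, hspan_pos, ← hrank, pow_succ]
  ring

theorem Convex.signedDim_inter_hyperplane [FiniteDimensional ℝ E] {F : Set E} (hF : Convex ℝ F)
    (hopen : IsOpen ((↑) ⁻¹' F : Set (span ℝ F))) (hne : F.Nonempty) (f : E →L[ℝ] ℝ) :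
    signedDim (F ∩ {x | f x = 0}) + signedDim (F ∩ {x | f x < 0}) +
      signedDim (F ∩ {x | 0 < f x}) = (-1) ^ finrank ℝ (span ℝ F) := by
  by_cases hcross : (∃ x ∈ F, f x < 0) ∧ ∃ x ∈ F, 0 < f x
  · exact signedDim_inter_hyperplane_of_exists_neg_of_exists_pos hF hopen f hcross.1 hcross.2
  rcases forall_eq_zero_or_forall_neg_or_forall_pos hopen f hcross with hzero | hneg | hpos
  · rw [signedDim_inter_setOf_of_forall hzero,
      signedDim_inter_setOf_of_forall_not fun x hx => (hzero x hx).not_lt,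
      signedDim_inter_setOf_of_forall_not fun x hx => (hzero x hx).not_gt,
      signedDim_of_nonempty hne, add_zero, add_zero]
  · rw [signedDim_inter_setOf_of_forall_not fun x hx => (hneg x hx).ne,
      signedDim_inter_setOf_of_forall hneg,
      signedDim_inter_setOf_of_forall_not fun x hx => (hneg x hx).not_gt,
      signedDim_of_nonempty hne, zero_add, add_zero]
  · rw [signedDim_inter_setOf_of_forall_not fun x hx => (hpos x hx).ne',
      signedDim_inter_setOf_of_forall_not fun x hx => (hpos x hx).not_gt,
      signedDim_inter_setOf_of_forall hpos, signedDim_of_nonempty hne, zero_add, zero_add]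

end SignedDim

theorem stmt6_general (m : ℕ) (w : Fin m → ℝ) (F : Set (Fin m → ℝ))
    (hconv : Convex ℝ F)
    (hopen : IsOpen {x : Submodule.span ℝ F | (x : Fin m → ℝ) ∈ F})
    (hne : F.Nonempty) :
    (if (F ∩ {v | ∑ i, v i * w i = 0}).Nonempty then
        (-1 : ℤ) ^ Module.finrank ℝ (Submodule.span ℝ (F ∩ {v | ∑ i, v i * w i = 0}))
      else 0) +
    (if (F ∩ {v | ∑ i, v i * w i < 0}).Nonempty then
        (-1 : ℤ) ^ Module.finrank ℝ (Submodule.span ℝ (F ∩ {v | ∑ i, v i * w i < 0}))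
      else 0) +
    (if (F ∩ {v | 0 < ∑ i, v i * w i}).Nonempty then
        (-1 : ℤ) ^ Module.finrank ℝ (Submodule.span ℝ (F ∩ {v | 0 < ∑ i, v i * w i}))
      else 0) =
    (-1 : ℤ) ^ Module.finrank ℝ (Submodule.span ℝ F) :=
  hconv.signedDim_inter_hyperplane hopen hne
    (LinearMap.toContinuousLinearMap ((dotProductBilin ℝ ℝ).flip w))

/-- For a relatively open convex set `F` and a hyperplane `H`, the alternating
sum of `(−1)^{dim(F∩H^*)}` over those `* ∈ {0,<,>}` with `F∩H^* ≠ ∅` equals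
`(−1)^{dim F}`. -/
theorem stmt6 (m : ℕ) (w : Fin m → ℝ) (hw : w ≠ 0) (F : Set (Fin m → ℝ))
    (hconv : Convex ℝ F)
    (hopen : IsOpen {x : Submodule.span ℝ F | (x : Fin m → ℝ) ∈ F})
    (hne : F.Nonempty) :
    (if (F ∩ {v | ∑ i, v i * w i = 0}).Nonempty then
        (-1 : ℤ) ^ Module.finrank ℝ (Submodule.span ℝ (F ∩ {v | ∑ i, v i * w i = 0}))
      else 0) +
    (if (F ∩ {v | ∑ i, v i * w i < 0}).Nonempty then
        (-1 : ℤ) ^ Module.finrank ℝ (Submodule.span ℝ (F ∩ {v | ∑ i, v i * w i < 0}))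
      else 0) +
    (if (F ∩ {v | 0 < ∑ i, v i * w i}).Nonempty then
        (-1 : ℤ) ^ Module.finrank ℝ (Submodule.span ℝ (F ∩ {v | 0 < ∑ i, v i * w i}))
      else 0) =
    (-1 : ℤ) ^ Module.finrank ℝ (Submodule.span ℝ F) :=
  stmt6_general m w F hconv hopen hne
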